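/- arXiv:1102.2702 — 8 statements merged into one kernel-verified Lean document; each statement's English description precedes it below -/
import Mathlib

section
/- For every conjugacy class C of the symmetric group S_n, there exists a permutation f in C with d_∞(f, ι) ≤ 2, where ι is the identity permutation. In other words, every conjugacy class intersects the ball B(ι, 2) in the ℓ∞-metric. -/
/-!
A permutation is determined up to conjugacy by its cycle type, so it suffices to realise every
cycle type inside the ball. A `k`-cycle is realised on an interval of length `k` by visiting
`0, 2, 4, …` upwards and then the odd points downwards: consecutive points of this tour, including
the last and the first, are at distance at most `2`. Placing such cycles on consecutive disjoint
intervals and fixing the remaining points keeps every displacement at most `2`.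
-/

/-- The ℓ∞-distance on permutations of `Fin n`. -/
def dinf {n : ℕ} (f g : Equiv.Perm (Fin n)) : ℕ :=
  Finset.univ.sup fun i : Fin n => ((f i : ℤ) - (g i : ℤ)).natAbs

open Equiv Equiv.Perm

section Displacement

variable {n : ℕ}

theorem dinf_one_le_iff {f : Perm (Fin n)} {r : ℕ} :
    dinf f 1 ≤ r ↔ ∀ i, ((f i : ℤ) - i).natAbs ≤ r := by
  simp [dinf]

theorem natAbs_apply_sub_le_dinf_one (f : Perm (Fin n)) (i : Fin n) :
    ((f i : ℤ) - i).natAbs ≤ dinf f 1 :=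
  dinf_one_le_iff.1 le_rfl i

theorem dinf_one_mul_le_of_disjoint {f g : Perm (Fin n)} (h : f.Disjoint g) :
    dinf (f * g) 1 ≤ max (dinf f 1) (dinf g 1) := by
  refine dinf_one_le_iff.2 fun i => ?_
  rcases h i with hf | hg
  · rw [h.commute.eq, mul_apply, hf]
    exact (natAbs_apply_sub_le_dinf_one g i).trans (le_max_right _ _)
  · rw [mul_apply, hg]
    exact (natAbs_apply_sub_le_dinf_one f i).trans (le_max_left _ _)

theorem dinf_one_conj_le {σ e : Perm (Fin n)} {r : ℕ}
    (h : ∀ j, ((e (σ j) : ℤ) - e j).natAbs ≤ r) : dinf (e * σ * e⁻¹) 1 ≤ r := by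
  refine dinf_one_le_iff.2 fun i => ?_
  simpa using h (e⁻¹ i)

theorem dinf_one_viaFintypeEmbedding_le {a : ℕ} (f : Perm (Fin a)) (ι : Fin a ↪ Fin n)
    (c : ℕ) (hι : ∀ i, (ι i : ℕ) = i + c) : dinf (f.viaFintypeEmbedding ι) 1 ≤ dinf f 1 := by
  refine dinf_one_le_iff.2 fun x => ?_
  by_cases hx : x ∈ Set.range ι
  · obtain ⟨i, rfl⟩ := hx
    rw [viaFintypeEmbedding_apply_image, hι, hι]
    simpa using natAbs_apply_sub_le_dinf_one f i
  · simp [viaFintypeEmbedding_apply_notMem_range f ι hx]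

end Displacement

theorem cycleType_viaFintypeEmbedding {α β : Type*} [Fintype α] [DecidableEq α] [Fintype β]
    [DecidableEq β] (f : Perm α) (ι : α ↪ β) :
    (f.viaFintypeEmbedding ι).cycleType = f.cycleType :=
  cycleType_extendDomain _

theorem disjoint_viaFintypeEmbedding_castAddEmb_natAddEmb {a b : ℕ} (f : Perm (Fin a))
    (g : Perm (Fin b)) :
    (f.viaFintypeEmbedding (Fin.castAddEmb b)).Disjoint
      (g.viaFintypeEmbedding (Fin.natAddEmb a)) := by
  intro x
  refine Fin.addCases (fun i => Or.inr ?_) (fun j => Or.inl ?_) x <;>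
    refine viaFintypeEmbedding_apply_notMem_range _ _ ?_ <;>
    rintro ⟨y, hy⟩ <;>
    simp only [Fin.ext_iff, Fin.natAddEmb_apply, Fin.coe_castAddEmb, Fin.val_castAdd,
      Fin.val_natAdd] at hy <;>
    omega

theorem exists_cycleType_add_dinf_one_le {a b : ℕ} (f : Perm (Fin a)) (g : Perm (Fin b)) :
    ∃ h : Perm (Fin (a + b)),
      h.cycleType = f.cycleType + g.cycleType ∧ dinf h 1 ≤ max (dinf f 1) (dinf g 1) := by
  have hdisj := disjoint_viaFintypeEmbedding_castAddEmb_natAddEmb f g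
  refine ⟨_, ?_, (dinf_one_mul_le_of_disjoint hdisj).trans ?_⟩
  · rw [hdisj.cycleType_mul, cycleType_viaFintypeEmbedding, cycleType_viaFintypeEmbedding]
  · exact max_le_max (dinf_one_viaFintypeEmbedding_le f _ 0 fun i => rfl)
      (dinf_one_viaFintypeEmbedding_le g _ a fun i => by simp [add_comm])

/-- `0, 2, 4, …` upwards, then the odd numbers downwards. -/
def zigzagFun {k : ℕ} (j : Fin k) : Fin k :=
  ⟨if 2 * j + 1 ≤ k then 2 * j else 2 * k - 1 - 2 * j, by split_ifs <;> omega⟩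

theorem zigzagFun_injective (k : ℕ) : Function.Injective (zigzagFun (k := k)) := by
  intro i j h
  have := congrArg Fin.val h
  simp only [zigzagFun] at this
  split_ifs at this <;> omega

noncomputable def zigzag (k : ℕ) : Perm (Fin k) :=
  Equiv.ofBijective zigzagFun (zigzagFun_injective k).bijective_of_finite

theorem natAbs_zigzag_finRotate_sub_le_two {k : ℕ} (j : Fin (k + 1)) :
    ((zigzag (k + 1) (finRotate (k + 1) j) : ℤ) - zigzag (k + 1) j).natAbs ≤ 2 := by
  have hrot : (finRotate (k + 1) j : ℕ) = if (j : ℕ) = k then 0 else (j : ℕ) + 1 := by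
    rw [finRotate_apply, Fin.val_add_one]
    simp only [Fin.ext_iff, Fin.val_last]
  simp only [zigzag, Equiv.ofBijective_apply, zigzagFun]
  generalize finRotate (k + 1) j = j' at *
  split_ifs at * <;> omega

theorem exists_cycleType_singleton_dinf_one_le_two {k : ℕ} (hk : 2 ≤ k) :
    ∃ f : Perm (Fin k), f.cycleType = {k} ∧ dinf f 1 ≤ 2 := by
  obtain ⟨k, rfl⟩ := Nat.exists_eq_add_of_le' hk
  exact ⟨zigzag _ * finRotate _ * (zigzag _)⁻¹, by rw [cycleType_conj, cycleType_finRotate],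
    dinf_one_conj_le natAbs_zigzag_finRotate_sub_le_two⟩

theorem exists_cycleType_eq_dinf_one_le_two (m : Multiset ℕ) (hm : ∀ a ∈ m, 2 ≤ a) :
    ∃ f : Perm (Fin m.sum), f.cycleType = m ∧ dinf f 1 ≤ 2 := by
  induction m using Multiset.induction with
  | empty => exact ⟨1, cycleType_one, by simp [dinf]⟩
  | cons a m ih =>
    obtain ⟨f, hf, hfd⟩ := exists_cycleType_singleton_dinf_one_le_two (hm a (m.mem_cons_self a))
    obtain ⟨g, hg, hgd⟩ := ih fun b hb => hm b (Multiset.mem_cons_of_mem hb)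
    obtain ⟨h, hh, hhd⟩ := exists_cycleType_add_dinf_one_le f g
    rw [Multiset.sum_cons]
    exact ⟨h, by rw [hh, hf, hg, Multiset.singleton_add], hhd.trans (max_le hfd hgd)⟩

theorem exists_cycleType_eq_dinf_one_le_two_of_sum_le {n : ℕ} (m : Multiset ℕ)
    (hm : ∀ a ∈ m, 2 ≤ a) (hsum : m.sum ≤ n) :
    ∃ f : Perm (Fin n), f.cycleType = m ∧ dinf f 1 ≤ 2 := by
  obtain ⟨k, rfl⟩ := Nat.exists_eq_add_of_le hsum
  obtain ⟨f, hf, hfd⟩ := exists_cycleType_eq_dinf_one_le_two m hm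
  obtain ⟨h, hh, hhd⟩ := exists_cycleType_add_dinf_one_le f (1 : Perm (Fin k))
  exact ⟨h, by simpa [hf] using hh, hhd.trans (max_le hfd (by simp [dinf]))⟩

/-- Every conjugacy class of `S_n` meets the ball of radius 2 around the identity
in the ℓ∞-metric. -/
theorem conjugacy_class_meets_ball_two (n : ℕ) (g : Equiv.Perm (Fin n)) :
    ∃ f : Equiv.Perm (Fin n), IsConj g f ∧ dinf f 1 ≤ 2 := by
  obtain ⟨f, hf, hfd⟩ := exists_cycleType_eq_dinf_one_le_two_of_sum_le g.cycleType
    (fun _ => two_le_of_mem_cycleType) ((sum_cycleType_le g).trans_eq (Fintype.card_fin n))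
  exact ⟨f, isConj_iff_cycleType_eq.2 hf.symm, hfd⟩
end

section
/- A subset C ⊆ S_n with |C| ≥ 2 admits a labeling l ∈ S_n with d(l C l^{-1}) = 1 if and only if the set {a b^{-1} : a, b ∈ C} contains an involution (a non-identity permutation g with g² = ι). -/
open Equiv Finset

theorem Equiv.Perm.isConj_of_sq_eq_one {α : Type*} [Fintype α] [DecidableEq α] {σ τ : Perm α}
    (hσ : σ ^ 2 = 1) (hτ : τ ^ 2 = 1) (h : #σ.support = #τ.support) : IsConj σ τ := by
  have hcard (π : Perm α) (hπ : π ^ 2 = 1) : 2 * Multiset.card π.cycleType = #π.support := by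
    rw [← π.sum_cycleType, Perm.cycleType_of_pow_prime_eq_one hπ, Multiset.sum_replicate,
      smul_eq_mul, Multiset.card_replicate, mul_comm]
  rw [Perm.isConj_iff_cycleType_eq, Perm.cycleType_of_pow_prime_eq_one hσ,
    Perm.cycleType_of_pow_prime_eq_one hτ]
  have := hcard σ hσ
  have := hcard τ hτ
  congr 1
  omega

section Dinf

variable {n : ℕ}

theorem natAbs_sub_le_dinf (f g : Perm (Fin n)) (i : Fin n) :
    ((f i : ℤ) - g i).natAbs ≤ dinf f g :=
  le_sup (f := fun i : Fin n => ((f i : ℤ) - g i).natAbs) (mem_univ i)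

theorem dinf_le_iff {f g : Perm (Fin n)} {k : ℕ} :
    dinf f g ≤ k ↔ ∀ i, ((f i : ℤ) - g i).natAbs ≤ k := by
  simp [dinf]

theorem dinf_comm (f g : Perm (Fin n)) : dinf f g = dinf g f := by
  simp only [dinf, ← Int.natAbs_neg ((f _ : ℤ) - _), neg_sub]

theorem dinf_eq_zero_iff {f g : Perm (Fin n)} : dinf f g = 0 ↔ f = g := by
  rw [← Nat.le_zero, dinf_le_iff, Perm.ext_iff]
  refine forall_congr' fun i => ?_
  simp [sub_eq_zero, Fin.ext_iff]

theorem one_le_dinf_of_ne {f g : Perm (Fin n)} (h : f ≠ g) : 1 ≤ dinf f g :=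
  Nat.one_le_iff_ne_zero.2 (dinf_eq_zero_iff.not.2 h)

theorem dinf_mul_right (f g h : Perm (Fin n)) : dinf (f * h) (g * h) = dinf f g := by
  refine le_antisymm (dinf_le_iff.2 fun i => natAbs_sub_le_dinf f g (h i)) ?_
  refine dinf_le_iff.2 fun i => ?_
  simpa using natAbs_sub_le_dinf (f * h) (g * h) (h⁻¹ i)

theorem dinf_eq_dinf_mul_inv_one (f g : Perm (Fin n)) : dinf f g = dinf (f * g⁻¹) 1 := by
  rw [← dinf_mul_right f g g⁻¹, mul_inv_cancel]

theorem dinf_conj (l f g : Perm (Fin n)) :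
    dinf (l * f * l⁻¹) (l * g * l⁻¹) = dinf (l * (f * g⁻¹) * l⁻¹) 1 := by
  rw [dinf_eq_dinf_mul_inv_one]
  group

theorem dinf_inv_one (σ : Perm (Fin n)) : dinf σ⁻¹ 1 = dinf σ 1 := by
  rw [dinf_comm σ, dinf_eq_dinf_mul_inv_one 1, one_mul]

theorem dinf_one_le_one_iff {σ : Perm (Fin n)} :
    dinf σ 1 ≤ 1 ↔ ∀ i, (σ i : ℕ) ≤ i + 1 ∧ (i : ℕ) ≤ σ i + 1 := by
  simp only [dinf_le_iff, Perm.one_apply]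
  refine forall_congr' fun i => ?_
  omega

end Dinf

section Displacement

variable {n : ℕ} {σ : Perm (Fin n)}

/-- The `j + 1` points that `σ` sends into `{0, …, j}` lie in `{0, …, j + 1} \ {j}`, which has
only `j + 1` elements, so `j + 1 = σ j` is one of them. -/
theorem apply_apply_eq_of_apply_eq_succ (hσ : dinf σ 1 ≤ 1) {j : Fin n}
    (hj : (σ j : ℕ) = j + 1) : σ (σ j) = j := by
  rw [dinf_one_le_one_iff] at hσ
  set S := (Iic j).map σ.symm.toEmbedding
  have mem_S (i : Fin n) : i ∈ S ↔ (σ i : ℕ) ≤ j := by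
    simp only [S, mem_map_equiv, symm_symm, mem_Iic, Fin.le_iff_val_le_val]
  have hsub : S ⊆ (Iic (σ j)).erase j := by
    intro i hi
    have hne : i ≠ j := by
      rintro rfl
      rw [mem_S] at hi
      omega
    have := (mem_S i).1 hi
    have := (hσ i).2
    exact mem_erase.2 ⟨hne, mem_Iic.2 (Fin.le_iff_val_le_val.2 (by omega))⟩
  have hcard : #((Iic (σ j)).erase j) ≤ #S := by
    rw [card_erase_of_mem (mem_Iic.2 (Fin.le_iff_val_le_val.2 (by omega))), card_map,
      Fin.card_Iic, Fin.card_Iic, hj, Nat.add_sub_cancel]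
  have hmem : σ j ∈ S := (eq_of_subset_of_card_le hsub hcard).symm ▸
    mem_erase.2 ⟨fun h => by simp [Fin.ext_iff] at h; omega, mem_Iic.2 le_rfl⟩
  have := (mem_S _).1 hmem
  have := (hσ (σ j)).2
  exact Fin.ext (by omega)

theorem sq_eq_one_of_dinf_one_le_one (hσ : dinf σ 1 ≤ 1) : σ ^ 2 = 1 := by
  refine Perm.ext fun i => ?_
  rw [sq, Perm.mul_apply, Perm.one_apply]
  obtain ⟨hup, hdown⟩ := dinf_one_le_one_iff.1 hσ i
  rcases lt_trichotomy (σ i : ℕ) i with hlt | heq | hgt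
  · have hinv := apply_apply_eq_of_apply_eq_succ (j := σ i) ((dinf_inv_one σ).le.trans hσ)
      (by simp only [Perm.coe_inv, symm_apply_apply]; omega)
    simp only [Perm.coe_inv, symm_apply_apply] at hinv
    exact (eq_symm_apply σ).1 hinv.symm
  · rw [Fin.ext heq, Fin.ext heq]
  · exact apply_apply_eq_of_apply_eq_succ hσ (by omega)

end Displacement

section AdjacentSwaps

variable {n k : ℕ} (hk : 2 * k ≤ n)

/-- The product of the transpositions `(2t, 2t+1)` for `t < k`. -/
def adjacentSwapsFun (i : Fin n) : Fin n :=
  if hi : (i : ℕ) < 2 * k then ⟨i + 1 - 2 * (i % 2), by omega⟩ else i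

theorem adjacentSwapsFun_involutive : Function.Involutive (adjacentSwapsFun hk) := by
  intro i
  unfold adjacentSwapsFun
  split_ifs <;> simp only [Fin.ext_iff] at * <;> omega

def adjacentSwaps : Perm (Fin n) :=
  (adjacentSwapsFun_involutive hk).toPerm

theorem adjacentSwaps_sq : adjacentSwaps hk ^ 2 = 1 :=
  Perm.ext (adjacentSwapsFun_involutive hk)

theorem card_support_adjacentSwaps : #(adjacentSwaps hk).support = 2 * k := by
  have : (adjacentSwaps hk).support = ({i : Fin n | i < 2 * k} : Finset (Fin n)) := by
    ext i
    simp only [Perm.mem_support, adjacentSwaps, Function.Involutive.coe_toPerm, adjacentSwapsFun,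
      mem_filter, mem_univ, true_and]
    split_ifs with hi
    · simp only [ne_eq, Fin.ext_iff, hi, iff_true]
      omega
    · simp [hi]
  rw [this, Fin.card_filter_val_lt, min_eq_right hk]

theorem dinf_adjacentSwaps_one_le_one : dinf (adjacentSwaps hk) 1 ≤ 1 := by
  refine dinf_one_le_one_iff.2 fun i => ?_
  simp only [adjacentSwaps, Function.Involutive.coe_toPerm, adjacentSwapsFun]
  split_ifs <;> simp only [and_self] <;> omega

end AdjacentSwaps

theorem exists_conj_dinf_one_le_one {n : ℕ} {g : Perm (Fin n)} (hg : g ^ 2 = 1) :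
    ∃ l : Perm (Fin n), dinf (l * g * l⁻¹) 1 ≤ 1 := by
  obtain ⟨k, hk⟩ := Perm.two_dvd_card_support hg
  have hkn : 2 * k ≤ n := hk ▸ (card_le_univ _).trans_eq (Fintype.card_fin n)
  obtain ⟨l, hl⟩ := isConj_iff.1 (Perm.isConj_of_sq_eq_one hg (adjacentSwaps_sq hkn)
    (by rw [hk, card_support_adjacentSwaps]))
  exact ⟨l, hl ▸ dinf_adjacentSwaps_one_le_one hkn⟩

theorem labeling_min_dist_one_iff_involution_general (n : ℕ) (C : Finset (Equiv.Perm (Fin n))) :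
    (∃ l : Equiv.Perm (Fin n),
      (∀ f ∈ C, ∀ g ∈ C, f ≠ g → 1 ≤ dinf (l * f * l⁻¹) (l * g * l⁻¹)) ∧
      (∃ f ∈ C, ∃ g ∈ C, f ≠ g ∧ dinf (l * f * l⁻¹) (l * g * l⁻¹) = 1)) ↔
    (∃ g : Equiv.Perm (Fin n), g ≠ 1 ∧ g ^ 2 = 1 ∧ ∃ a ∈ C, ∃ b ∈ C, g = a * b⁻¹) := by
  constructor
  · rintro ⟨l, -, a, ha, b, hb, hab, hd⟩
    rw [dinf_conj] at hd
    have hsq := sq_eq_one_of_dinf_one_le_one hd.le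
    rw [conj_pow, conj_eq_one_iff] at hsq
    exact ⟨a * b⁻¹, mul_inv_eq_one.not.2 hab, hsq, a, ha, b, hb, rfl⟩
  · rintro ⟨g, hg1, hg2, a, ha, b, hb, rfl⟩
    obtain ⟨l, hl⟩ := exists_conj_dinf_one_le_one hg2
    have conj_ne {f g : Perm (Fin n)} (h : f ≠ g) : l * f * l⁻¹ ≠ l * g * l⁻¹ :=
      conj_injective.ne h
    have hab : a ≠ b := mul_inv_eq_one.not.1 hg1
    exact ⟨l, fun f _ g _ hfg => one_le_dinf_of_ne (conj_ne hfg), a, ha, b, hb, hab,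
      le_antisymm (dinf_conj l a b ▸ hl) (one_le_dinf_of_ne (conj_ne hab))⟩

/-- A code `C` with at least two elements admits a labeling of minimal
ℓ∞-distance exactly 1 iff `{a b⁻¹ : a, b ∈ C}` contains an involution. -/
theorem labeling_min_dist_one_iff_involution (n : ℕ) (C : Finset (Equiv.Perm (Fin n)))
    (hC : 2 ≤ C.card) :
    (∃ l : Equiv.Perm (Fin n),
      (∀ f ∈ C, ∀ g ∈ C, f ≠ g → 1 ≤ dinf (l * f * l⁻¹) (l * g * l⁻¹)) ∧
      (∃ f ∈ C, ∃ g ∈ C, f ≠ g ∧ dinf (l * f * l⁻¹) (l * g * l⁻¹) = 1)) ↔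
    (∃ g : Equiv.Perm (Fin n), g ≠ 1 ∧ g ^ 2 = 1 ∧ ∃ a ∈ C, ∃ b ∈ C, g = a * b⁻¹) :=
  labeling_min_dist_one_iff_involution_general n C
end

section
/- Let C ⊆ S_n be a transitive cyclic subgroup acting on [n] = {1,...,n}. Then for any labeling l ∈ S_n, the minimal ℓ∞-distance satisfies d(l C l^{-1}) ≤ n − ⌈(√(4n−3) − 1)/2⌉. -/
/-- The ℓ∞-weight of a permutation of `Fin n`: `max_i |f i - i|`. -/
def wt {n : ℕ} (f : Equiv.Perm (Fin n)) : ℕ :=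
  Finset.univ.sup fun i : Fin n => ((f i : ℤ) - (i : ℤ)).natAbs

/-!
An abelian transitive group of permutations is regular: each element is determined by the image
of any single point, and this survives conjugation by `l`. If every nontrivial element of
`l C l⁻¹` moved some point by more than `n - k`, choosing such a point for each of the `n - 1`
nontrivial elements would give `n - 1` distinct pairs `(i, j)` with `|i - j| > n - k`. There are
only `k (k - 1)` such pairs, and `k (k - 1) < n - 1` for `k = ⌈(√(4n - 3) - 1) / 2⌉`.
-/

open Equiv Finset

theorem eq_of_apply_eq_of_isMulCommutative {α : Type*} {C : Subgroup (Perm α)}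
    [IsMulCommutative C] (htrans : ∀ a b : α, ∃ g ∈ C, g a = b) {g h : Perm α}
    (hg : g ∈ C) (hh : h ∈ C) {x : α} (hx : g x = h x) : g = h := by
  ext y
  obtain ⟨c, hc, rfl⟩ := htrans x y
  calc g (c x) = c (g x) := by rw [← Perm.mul_apply, setLike_mul_comm hg hc, Perm.mul_apply]
    _ = c (h x) := by rw [hx]
    _ = h (c x) := by rw [← Perm.mul_apply, setLike_mul_comm hc hh, Perm.mul_apply]

theorem card_le_card_of_transitive {α : Type*} [Finite α] (C : Subgroup (Perm α))
    (htrans : ∀ a b : α, ∃ g ∈ C, g a = b) : Nat.card α ≤ Nat.card C := by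
  cases isEmpty_or_nonempty α with
  | inl _ => simp
  | inr hα =>
    obtain ⟨a⟩ := hα
    refine Nat.card_le_card_of_surjective (fun g : C => (g : Perm α) a) fun b => ?_
    obtain ⟨g, hg, hgb⟩ := htrans a b
    exact ⟨⟨g, hg⟩, hgb⟩

theorem lt_wt_iff {n m : ℕ} {f : Perm (Fin n)} :
    m < wt f ↔ ∃ i, m < ((f i : ℤ) - i).natAbs := by
  simp [wt, Finset.lt_sup_iff]

/-- A pair `(a, b)` at distance more than `n - k` is sent to a pair of distinct elements of
`range k` by moving its larger entry down by `n - k`; the order of the entries is kept, so this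
is injective. -/
theorem card_far_pairs_le {n k : ℕ} (hk : k ≤ n) :
    #{p : Fin n × Fin n | n < ((p.2 : ℤ) - p.1).natAbs + k} ≤ k * (k - 1) := by
  let φ : Fin n × Fin n → ℕ × ℕ := fun p =>
    if p.1 < p.2 then (p.1, p.2 + k - n) else (p.1 + k - n, p.2)
  calc #{p : Fin n × Fin n | n < ((p.2 : ℤ) - p.1).natAbs + k}
      ≤ #(range k).offDiag := by
        refine card_le_card_of_injOn φ (fun p hp => ?_) fun p hp q hq hpq => ?_
        · simp only [coe_filter, mem_univ, true_and, Set.mem_ofPred_eq] at hp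
          simp only [φ, coe_offDiag, coe_range, Set.mem_offDiag, Set.mem_Iio]
          split_ifs <;> simp only [Fin.lt_def] at * <;> omega
        · simp only [coe_filter, mem_univ, true_and, Set.mem_ofPred_eq] at hp hq
          simp only [φ] at hpq
          have := p.1.isLt; have := p.2.isLt; have := q.1.isLt; have := q.2.isLt
          ext <;> split_ifs at hpq <;> simp only [Prod.mk.injEq, Fin.lt_def] at * <;> omega
    _ = k * (k - 1) := by rw [offDiag_card, card_range, Nat.mul_sub_one]

theorem card_le_of_forall_lt_wt {ι : Type*} {n k : ℕ} (hk : k ≤ n) (s : Finset ι)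
    (f : ι → Perm (Fin n)) (hf : ∀ i ∈ s, ∀ j ∈ s, ∀ x, f i x = f j x → i = j)
    (hfar : ∀ i ∈ s, n < wt (f i) + k) : #s ≤ k * (k - 1) := by
  have hwit : ∀ i ∈ s, ∃ x, n < ((f i x : ℤ) - x).natAbs + k := fun i hi => by
    obtain ⟨x, hx⟩ := lt_wt_iff.mp (Nat.sub_lt_right_of_lt_add hk (hfar i hi))
    exact ⟨x, by omega⟩
  obtain rfl | ⟨i₀, hi₀⟩ := s.eq_empty_or_nonempty
  · simp
  have : Nonempty (Fin n) := ⟨(hwit i₀ hi₀).choose⟩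
  choose! x hx using hwit
  calc #s ≤ #{p : Fin n × Fin n | n < ((p.2 : ℤ) - p.1).natAbs + k} := by
        refine card_le_card_of_injOn (fun i => (x i, f i (x i))) (fun i hi => ?_)
          fun i hi j hj hij => ?_
        · simpa using hx i hi
        · obtain ⟨hxij, hfij⟩ := Prod.mk.inj hij
          rw [hxij] at hfij
          exact hf i hi j hj _ hfij
    _ ≤ k * (k - 1) := card_far_pairs_le hk

theorem ceil_mul_pred_add_two_le {n : ℕ} (hn : 2 ≤ n) :
    ⌈(√(4 * n - 3) - 1) / 2⌉₊ * (⌈(√(4 * n - 3) - 1) / 2⌉₊ - 1) + 2 ≤ n := by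
  set k := ⌈(√(4 * n - 3) - 1) / 2⌉₊
  have hn' : (2 : ℝ) ≤ n := by exact_mod_cast hn
  have hsqrt : 1 ≤ √(4 * n - 3) := Real.one_le_sqrt.mpr (by linarith)
  have hk : (k : ℝ) < (√(4 * n - 3) - 1) / 2 + 1 := Nat.ceil_lt_add_one (by linarith)
  rcases Nat.eq_zero_or_pos k with hk0 | hk0
  · simp [hk0, hn]
  have hk1 : (1 : ℝ) ≤ k := by exact_mod_cast hk0
  have hsq : (2 * k - 1 : ℝ) ^ 2 < 4 * n - 3 :=
    (Real.lt_sqrt (by linarith)).mp (by linarith)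
  have : ((k * (k - 1) + 2 : ℕ) : ℝ) < n + 1 := by
    push_cast [Nat.cast_sub hk0]
    nlinarith
  exact Nat.lt_succ_iff.mp (by exact_mod_cast this)

/-- For a transitive cyclic subgroup `C ≤ S_n` and any labeling `l`, the minimal
ℓ∞-distance of `l C l⁻¹` is at most `n - ⌈(√(4n-3) - 1)/2⌉`. -/
theorem cyclic_group_labeling_upper_bound (n : ℕ) (hn : 2 ≤ n)
    (C : Subgroup (Equiv.Perm (Fin n))) (hcyc : IsCyclic C)
    (htrans : ∀ a b : Fin n, ∃ g ∈ C, g a = b)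
    (l : Equiv.Perm (Fin n)) :
    ∃ g ∈ C, g ≠ 1 ∧
      (wt (l * g * l⁻¹) : ℝ) ≤
        (n : ℝ) - (⌈(Real.sqrt (4 * n - 3) - 1) / 2⌉₊ : ℝ) := by
  classical
  have hk := ceil_mul_pred_add_two_le hn
  set k := ⌈(√(4 * n - 3) - 1) / 2⌉₊
  have hkn : k ≤ n := by
    rcases Nat.lt_or_ge k 2 with h | h
    · omega
    · nlinarith [Nat.sub_add_cancel (one_le_two.trans h)]
  by_contra! hfar
  have : IsMulCommutative C := hcyc.isMulCommutative
  let s := (univ : Finset C).erase 1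
  have hs : n - 1 ≤ #s := by
    simpa [s, card_erase_of_mem, Nat.card_eq_fintype_card] using
      Nat.sub_le_sub_right (card_le_card_of_transitive C htrans) 1
  have hinj : ∀ g ∈ s, ∀ h ∈ s, ∀ x,
      (l * g * l⁻¹ : Perm (Fin n)) x = (l * h * l⁻¹ : Perm (Fin n)) x → g = h :=
    fun g _ h _ x hx => Subtype.ext <|
      eq_of_apply_eq_of_isMulCommutative htrans g.2 h.2 (x := l⁻¹ x) (by simpa using hx)
  have hwt : ∀ g ∈ s, n < wt (l * g * l⁻¹ : Perm (Fin n)) + k := fun g hg => by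
    have := hfar g g.2 (by simpa [s] using hg)
    exact_mod_cast (by linarith : (n : ℝ) < wt (l * (g : Perm (Fin n)) * l⁻¹) + k)
  have := card_le_of_forall_lt_wt hkn s (fun g => l * g * l⁻¹) hinj hwt
  omega
end

section
/- Let p ≥ 3 be a prime and let AGL(p) = {x ↦ a x + b : a ∈ GF(p)*, b ∈ GF(p)} acting on {0,1,...,p−1} (identified with integers). Then the minimal ℓ∞-distance of AGL(p) equals (p−1)/2. -/
/-!
Write `d(x) = val (f x) - val x ∈ (-p, p)`; it is congruent mod `p` to the displacement `f x - x`.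
If `f` is affine with slope `a ≠ 1`, then `x ↦ f x - x` is onto `ZMod p`, so some `x` has
displacement `(p - 1) / 2`, and the only integers in `(-p, p)` congruent to it are `(p - 1) / 2`
and `-(p + 1) / 2`. A translation by `b ≠ 0` has `d(0) = val b` and `d(-b) = -val (-b)`, whose
absolute values sum to `p`. The bound is attained by `x ↦ 2 x`: `d(x)` is `val x` when
`2 val x < p` and `val x - p` otherwise.
-/

/-- The ℓ∞-weight of a permutation of `ZMod p`, using integer representatives
in `{0, ..., p-1}`: `max_x |f x - x|`. -/
def wtZ (p : ℕ) [NeZero p] (f : Equiv.Perm (ZMod p)) : ℕ :=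
  Finset.univ.sup fun x : ZMod p => (((f x).val : ℤ) - ((x).val : ℤ)).natAbs

/-- `f` is an affine permutation `x ↦ a x + b` with `a ≠ 0`, i.e. an element of `AGL(p)`. -/
def IsAffine (p : ℕ) (f : Equiv.Perm (ZMod p)) : Prop :=
  ∃ a b : ZMod p, a ≠ 0 ∧ ∀ x : ZMod p, f x = a * x + b

section wtZ

variable {p : ℕ} [NeZero p]

lemma wtZ_le_iff {f : Equiv.Perm (ZMod p)} {w : ℕ} :
    wtZ p f ≤ w ↔ ∀ x : ZMod p, (((f x).val : ℤ) - x.val).natAbs ≤ w := by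
  simp [wtZ, Finset.sup_le_iff]

lemma natAbs_val_sub_val_le_wtZ (f : Equiv.Perm (ZMod p)) (x : ZMod p) :
    (((f x).val : ℤ) - x.val).natAbs ≤ wtZ p f :=
  wtZ_le_iff.mp le_rfl x

@[simp]
lemma wtZ_one : wtZ p 1 = 0 :=
  Nat.le_zero.mp (wtZ_le_iff.mpr fun x => by simp)

lemma le_wtZ_of_sub_eq {f : Equiv.Perm (ZMod p)} {x : ZMod p} {m : ℕ} (hm : m ≤ p / 2)
    (h : f x - x = m) : m ≤ wtZ p f :=
  calc m = (m : ℤ).natAbs := rfl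
    _ ≤ (((f x).val : ℤ) - x.val).natAbs :=
      ZMod.natAbs_min_of_le_div_two p _ _ (by push_cast; simp [h]) hm
    _ ≤ wtZ p f := natAbs_val_sub_val_le_wtZ f x

lemma le_two_mul_wtZ_of_add {f : Equiv.Perm (ZMod p)} {b : ZMod p} (hb : b ≠ 0)
    (hf : ∀ x, f x = x + b) : p ≤ 2 * wtZ p f := by
  have h0 := natAbs_val_sub_val_le_wtZ f 0
  have hneg := natAbs_val_sub_val_le_wtZ f (-b)
  have hsum : (-b).val = p - b.val := by simp [ZMod.neg_val, hb]
  rw [hf] at h0 hneg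
  simp only [zero_add, ZMod.val_zero, Nat.cast_zero, sub_zero, Int.natAbs_natCast,
    neg_add_cancel] at h0 hneg
  have := ZMod.val_lt b
  omega

lemma wtZ_of_forall_eq_two_mul (hp : Odd p) {f : Equiv.Perm (ZMod p)}
    (hf : ∀ x, f x = 2 * x) : wtZ p f = (p - 1) / 2 := by
  obtain ⟨m, hm⟩ := hp
  rw [show (p - 1) / 2 = m by omega]
  have hdouble : ∀ x : ZMod p, (f x).val = (x.val + x.val) % p := by
    intro x
    rw [← ZMod.val_add, ← two_mul, hf]
  apply le_antisymm
  · refine wtZ_le_iff.mpr fun x => ?_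
    have := ZMod.val_lt x
    rw [hdouble]
    rcases lt_or_ge (x.val + x.val) p with h | h
    · rw [Nat.mod_eq_of_lt h]; omega
    · rw [Nat.mod_eq_sub_mod h, Nat.mod_eq_of_lt (by omega)]; omega
  · exact le_wtZ_of_sub_eq (x := m) (by omega) (by rw [hf]; ring)

end wtZ

lemma IsAffine.half_le_wtZ {p : ℕ} [NeZero p] [Fact p.Prime] {f : Equiv.Perm (ZMod p)}
    (hf : IsAffine p f) (hne : f ≠ 1) : (p - 1) / 2 ≤ wtZ p f := by
  obtain ⟨a, b, -, hf⟩ := hf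
  by_cases ha : a = 1
  · have hb : b ≠ 0 := by
      rintro rfl
      exact hne (Equiv.ext fun x => by simp [hf, ha])
    have := le_two_mul_wtZ_of_add hb fun x => by rw [hf, ha, one_mul]
    omega
  · have ha' : a - 1 ≠ 0 := sub_ne_zero.mpr ha
    refine le_wtZ_of_sub_eq (x := (a - 1)⁻¹ * (((p - 1) / 2 : ℕ) - b : ZMod p)) (by omega) ?_
    rw [hf]
    field_simp
    ring

/-- For any prime `p ≥ 3`, the minimal ℓ∞-distance of `AGL(p)` with its natural
labeling equals `(p-1)/2`. -/
theorem agl_natural_min_dist (p : ℕ) [NeZero p] (hp : p.Prime) (h3 : 3 ≤ p) :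
    (∀ f : Equiv.Perm (ZMod p), IsAffine p f → f ≠ 1 → (p - 1) / 2 ≤ wtZ p f) ∧
    (∃ f : Equiv.Perm (ZMod p), IsAffine p f ∧ f ≠ 1 ∧ wtZ p f = (p - 1) / 2) := by
  have := Fact.mk hp
  refine ⟨fun f hf hne => hf.half_le_wtZ hne, ?_⟩
  have h2 : (2 : ZMod p) ≠ 0 := Ring.two_ne_zero (by rw [ZMod.ringChar_zmod_n]; omega)
  have hwt : wtZ p (Equiv.mulLeft₀ 2 h2) = (p - 1) / 2 :=
    wtZ_of_forall_eq_two_mul (hp.odd_of_ne_two (by omega)) fun _ => rfl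
  refine ⟨Equiv.mulLeft₀ 2 h2, ⟨2, 0, h2, fun x => by simp⟩, ?_, hwt⟩
  rintro h
  rw [h, wtZ_one] at hwt
  omega
end

section
/- Let C ⊆ S_n be a subgroup acting on [n], and suppose A, B ⊆ [n] are disjoint sets such that for every f ∈ C, f ≠ ι, we have (f(A) ∩ B) ∪ (f(B) ∩ A) ≠ ∅ (i.e., A and B are C-neighboring sets). Then there exists a labeling l ∈ S_n with minimal ℓ∞-distance d(l C l^{-1}) ≥ n − (|A| + |B|) + 1. -/
open Finset

section Counting

variable {α : Type*} {n : ℕ} {f : Fin n → α} {s : Finset α} {p : Fin n}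

theorem lt_card_of_injective_of_forall_le_mem (hf : Function.Injective f)
    (hs : ∀ q ≤ p, f q ∈ s) : (p : ℕ) < #s := by
  have := card_le_card_of_injOn f (s := Iic p) (fun q hq => hs q (mem_Iic.1 hq)) hf.injOn
  rw [Fin.card_Iic] at this
  omega

theorem sub_card_le_of_injective_of_forall_ge_mem (hf : Function.Injective f)
    (hs : ∀ q ≥ p, f q ∈ s) : n - #s ≤ p := by
  have := card_le_card_of_injOn f (s := Ici p) (fun q hq => hs q (mem_Ici.1 hq)) hf.injOn
  rw [Fin.card_Ici] at this
  omega

end Counting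

theorem exists_perm_forall_add_lt {n : ℕ} (A B : Finset (Fin n)) (hAB : Disjoint A B) :
    ∃ l : Equiv.Perm (Fin n), ∀ a ∈ A, ∀ b ∈ B, (l a : ℕ) + (n - (#A + #B)) < l b := by
  classical
  let key : Fin n → ℕ := fun x => if x ∈ A then 0 else if x ∈ B then 2 else 1
  have key_of_mem_A : ∀ a ∈ A, key a = 0 := fun a ha => if_pos ha
  have key_of_mem_B : ∀ b ∈ B, key b = 2 := fun b hb => by
    simp [key, hb, disjoint_right.1 hAB hb]
  have mem_A_of_key : ∀ x, key x ≤ 0 → x ∈ A := fun x => by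
    unfold key; split_ifs <;> simp_all
  have mem_B_of_key : ∀ x, 2 ≤ key x → x ∈ B := fun x => by
    unfold key; split_ifs <;> simp_all
  let σ := Tuple.sort key
  have hmono : Monotone (key ∘ σ) := Tuple.monotone_sort key
  refine ⟨σ⁻¹, fun a ha b hb => ?_⟩
  have hA : (σ⁻¹ a : ℕ) < #A := lt_card_of_injective_of_forall_le_mem σ.injective fun q hq =>
    mem_A_of_key _ (by simpa [key_of_mem_A a ha] using hmono hq)
  have hB : n - #B ≤ (σ⁻¹ b : ℕ) :=
    sub_card_le_of_injective_of_forall_ge_mem σ.injective fun q hq =>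
      mem_B_of_key _ (by simpa [key_of_mem_B b hb] using hmono hq)
  have hcard : #A + #B ≤ n := by
    simpa [card_union_of_disjoint hAB] using card_le_univ (A ∪ B)
  omega

theorem natAbs_sub_le_wt {n : ℕ} (f : Equiv.Perm (Fin n)) (i : Fin n) :
    ((f i : ℤ) - i).natAbs ≤ wt f :=
  le_sup (f := fun i : Fin n => ((f i : ℤ) - i).natAbs) (mem_univ i)

theorem add_one_le_wt {n d : ℕ} {f : Equiv.Perm (Fin n)} {i j : Fin n}
    (hij : f i = j ∨ f j = i) (h : (i : ℕ) + d < j) : d + 1 ≤ wt f := by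
  rcases hij with hfi | hfj
  · have := natAbs_sub_le_wt f i
    rw [hfi] at this
    omega
  · have := natAbs_sub_le_wt f j
    rw [hfj] at this
    omega

/-- If `A, B` are disjoint `C`-neighboring sets for a subgroup `C ≤ S_n`, then
some labeling `l` gives `l C l⁻¹` minimal ℓ∞-distance at least `n - (|A|+|B|) + 1`. -/
theorem neighboring_sets_lower_bound (n : ℕ) (C : Subgroup (Equiv.Perm (Fin n)))
    (A B : Finset (Fin n)) (hAB : Disjoint A B)
    (hnb : ∀ f : Equiv.Perm (Fin n), f ∈ C → f ≠ 1 →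
      (∃ a ∈ A, f a ∈ B) ∨ (∃ b ∈ B, f b ∈ A)) :
    ∃ l : Equiv.Perm (Fin n), ∀ g ∈ C, g ≠ 1 →
      n - (A.card + B.card) + 1 ≤ wt (l * g * l⁻¹) := by
  obtain ⟨l, hl⟩ := exists_perm_forall_add_lt A B hAB
  refine ⟨l, fun g hg hg1 => ?_⟩
  have conj_apply : ∀ x, (l * g * l⁻¹) (l x) = l (g x) := by simp [Equiv.Perm.mul_apply]
  rcases hnb g hg hg1 with ⟨a, ha, hga⟩ | ⟨b, hb, hgb⟩
  · exact add_one_le_wt (Or.inl (conj_apply a)) (hl a ha _ hga)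
  · exact add_one_le_wt (Or.inr (conj_apply b)) (hl _ hgb b hb)
end

section
/- Let C ⊆ S_n be a subgroup and suppose there is a labeling l ∈ S_n with d(l C l^{-1}) = D ≥ n/2. Then there exist disjoint C-neighboring sets A, B ⊆ [n] with |A| + |B| ≤ 2(n − D); consequently O(C) ≤ 2(n − L_max(C)) whenever L_max(C) ≥ n/2. -/
open Finset Equiv

namespace Fin

theorem card_filter_apply_val_lt {n : ℕ} (e : Perm (Fin n)) (m : ℕ) :
    #{j | (e j : ℕ) < m} = min n m := by
  rw [← card_filter_val_lt, ← card_map e.toEmbedding, map_filter]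
  simp

theorem card_filter_le_apply_val {n : ℕ} (e : Perm (Fin n)) (m : ℕ) :
    #{j | m ≤ (e j : ℕ)} = n - m := by
  have h := card_filter_apply_val_lt (Fin.revPerm * e) (n - m)
  rw [min_eq_right (n.sub_le m)] at h
  rw [← h]
  congr 1
  ext j
  have := (e j).isLt
  simp only [mem_filter, mem_univ, true_and, Perm.mul_apply, revPerm_apply, val_rev]
  omega

end Fin

theorem exists_wt_eq_natAbs {n : ℕ} [Nonempty (Fin n)] (σ : Perm (Fin n)) :
    ∃ i, wt σ = ((σ i : ℤ) - i).natAbs := by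
  obtain ⟨i, -, hi⟩ := exists_mem_eq_sup univ univ_nonempty
    fun i : Fin n => ((σ i : ℤ) - i).natAbs
  exact ⟨i, hi⟩

theorem exists_le_natAbs_of_le_wt_conj {n D : ℕ} [Nonempty (Fin n)] {l f : Perm (Fin n)}
    (h : D ≤ wt (l * f * l⁻¹)) : ∃ j, D ≤ ((l (f j) : ℤ) - l j).natAbs := by
  obtain ⟨i, hi⟩ := exists_wt_eq_natAbs (l * f * l⁻¹)
  refine ⟨l⁻¹ i, ?_⟩
  simpa [hi] using h

theorem labeling_gives_neighboring_sets_general (n : ℕ) (C : Subgroup (Equiv.Perm (Fin n)))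
    (l : Equiv.Perm (Fin n)) (D : ℕ) (hD : n ≤ 2 * D)
    (hmin : ∀ g ∈ C, g ≠ 1 → D ≤ wt (l * g * l⁻¹)) :
    ∃ A B : Finset (Fin n), Disjoint A B ∧
      (∀ f : Equiv.Perm (Fin n), f ∈ C → f ≠ 1 →
        (∃ a ∈ A, f a ∈ B) ∨ (∃ b ∈ B, f b ∈ A)) ∧
      A.card + B.card ≤ 2 * (n - D) := by
  refine ⟨({j | (l j : ℕ) < n - D} : Finset _), ({j | D ≤ (l j : ℕ)} : Finset _), ?_, ?_, ?_⟩
  · exact disjoint_filter.2 fun j _ hlt hle => by omega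
  · intro f hfC hf
    have : Nonempty (Fin n) := not_isEmpty_iff.1 fun _ => hf (Subsingleton.elim _ _)
    obtain ⟨j, hj⟩ := exists_le_natAbs_of_le_wt_conj (hmin f hfC hf)
    have := (l j).isLt
    have := (l (f j)).isLt
    simp only [mem_filter, mem_univ, true_and]
    by_cases hup : (l j : ℕ) < l (f j)
    · exact .inl ⟨j, by omega, by omega⟩
    · exact .inr ⟨j, by omega, by omega⟩
  · rw [Fin.card_filter_apply_val_lt, Fin.card_filter_le_apply_val]
    omega

/-- If a subgroup `C ≤ S_n` has a labeling `l` with minimal ℓ∞-distance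
`D ≥ n/2`, then there are disjoint `C`-neighboring sets `A, B` with
`|A| + |B| ≤ 2(n - D)`. -/
theorem labeling_gives_neighboring_sets (n : ℕ) (C : Subgroup (Equiv.Perm (Fin n)))
    (l : Equiv.Perm (Fin n)) (D : ℕ) (hD : n ≤ 2 * D)
    (hmin : ∀ g ∈ C, g ≠ 1 → D ≤ wt (l * g * l⁻¹))
    (hex : ∃ g ∈ C, g ≠ 1 ∧ wt (l * g * l⁻¹) = D) :
    ∃ A B : Finset (Fin n), Disjoint A B ∧
      (∀ f : Equiv.Perm (Fin n), f ∈ C → f ≠ 1 →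
        (∃ a ∈ A, f a ∈ B) ∨ (∃ b ∈ B, f b ∈ A)) ∧
      A.card + B.card ≤ 2 * (n - D) :=
  labeling_gives_neighboring_sets_general n C l D hD hmin
end

section
/- For p ∈ {3, 5}, there do not exist AGL(p)-neighboring sets; i.e., O(AGL(p)) = ∞. More precisely, for any two disjoint nonempty sets A, B ⊆ {0,...,p−1}, there exists a non-identity f ∈ AGL(p) with f(A) ∩ B = ∅ and f(B) ∩ A = ∅. -/
/-!
Every set of at most two points is mapped onto itself by a point reflection `x ↦ c - x`, a
non-identity affine map once `p > 2`. A permutation `f` with `f(A) = A` separates `A` from a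
disjoint `B`: `f(A) ∩ B = A ∩ B = ∅` and `f(B) ∩ A = f(B) ∩ f(A) = f(B ∩ A) = ∅`. For `p ≤ 5`,
one of two disjoint subsets of `GF(p)` has at most two points.
-/

open Finset

def Separates {α : Type*} (f : Equiv.Perm α) (A B : Finset α) : Prop :=
  (∀ a ∈ A, f a ∉ B) ∧ (∀ b ∈ B, f b ∉ A)

theorem Separates.symm {α : Type*} {f : Equiv.Perm α} {A B : Finset α} (h : Separates f A B) :
    Separates f B A :=
  And.symm h

theorem separates_of_mapsTo {α : Type*} {f : Equiv.Perm α} {A B : Finset α}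
    (hAB : Disjoint A B) (hf : ∀ x ∈ A, f x ∈ A) : Separates f A B := by
  have hmap : A.map f.toEmbedding = A :=
    map_eq_of_subset fun y hy => by
      obtain ⟨x, hx, rfl⟩ := mem_map.mp hy
      exact hf x hx
  refine ⟨fun a ha => disjoint_left.mp hAB (hf a ha), fun b hb hfb => ?_⟩
  obtain ⟨a, ha, hab⟩ := mem_map.mp (hmap.symm ▸ hfb)
  exact disjoint_left.mp hAB (f.injective hab ▸ ha) hb

theorem exists_sub_mem_of_card_le_two {G : Type*} [AddCommGroup G] {A : Finset G}
    (hA : #A ≤ 2) : ∃ c, ∀ x ∈ A, c - x ∈ A := by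
  classical
  interval_cases h : #A
  · exact ⟨0, by simp [card_eq_zero.mp h]⟩
  · obtain ⟨a, rfl⟩ := card_eq_one.mp h
    exact ⟨a + a, by simp⟩
  · obtain ⟨a, b, -, hab⟩ := card_eq_two.mp h
    exact ⟨a + b, by simp [hab]⟩

theorem isAffine_subLeft {p : ℕ} (hp : 1 < p) (c : ZMod p) : IsAffine p (Equiv.subLeft c) := by
  have : Fact (1 < p) := ⟨hp⟩
  exact ⟨-1, c, neg_ne_zero.mpr one_ne_zero, fun x => by simp [sub_eq_neg_add]⟩

theorem subLeft_ne_one {p : ℕ} (hp : 2 < p) (c : ZMod p) : Equiv.subLeft c ≠ 1 := by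
  have : Fact (2 < p) := ⟨hp⟩
  intro h
  have h0 : c - 0 = 0 := congrArg (· 0) h
  have h1 : c - 1 = 1 := congrArg (· 1) h
  rw [sub_zero] at h0
  rw [h0, zero_sub] at h1
  exact ZMod.neg_one_ne_one h1

theorem exists_affine_separates_of_card_le_two {p : ℕ} (hp : 2 < p) {A B : Finset (ZMod p)}
    (hAB : Disjoint A B) (hA : #A ≤ 2) :
    ∃ f, IsAffine p f ∧ f ≠ 1 ∧ Separates f A B := by
  obtain ⟨c, hc⟩ := exists_sub_mem_of_card_le_two hA
  exact ⟨Equiv.subLeft c, isAffine_subLeft (by omega) c, subLeft_ne_one hp c,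
    separates_of_mapsTo hAB hc⟩

theorem card_add_card_le_of_disjoint {p : ℕ} [NeZero p] {A B : Finset (ZMod p)}
    (hAB : Disjoint A B) : #A + #B ≤ p := by
  rw [← card_union_of_disjoint hAB]
  exact (card_le_univ _).trans_eq (ZMod.card p)

theorem agl_three_five_no_neighboring_sets_general (p : ℕ) (hp : p = 3 ∨ p = 5)
    (A B : Finset (ZMod p)) (hAB : Disjoint A B) :
    ∃ f : Equiv.Perm (ZMod p), IsAffine p f ∧ f ≠ 1 ∧
      (∀ a ∈ A, f a ∉ B) ∧ (∀ b ∈ B, f b ∉ A) := by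
  have hp2 : 2 < p := by omega
  have : NeZero p := ⟨by omega⟩
  have hcard := card_add_card_le_of_disjoint hAB
  by_cases hA : #A ≤ 2
  · exact exists_affine_separates_of_card_le_two hp2 hAB hA
  · obtain ⟨f, hf, hf1, hsep⟩ :=
      exists_affine_separates_of_card_le_two hp2 hAB.symm (by omega : #B ≤ 2)
    exact ⟨f, hf, hf1, hsep.symm⟩

/-- For `p ∈ {3, 5}` there are no `AGL(p)`-neighboring sets: for any two disjoint
nonempty sets `A, B ⊆ GF(p)` there is a non-identity affine permutation `f` with
`f(A) ∩ B = ∅` and `f(B) ∩ A = ∅`. -/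
theorem agl_three_five_no_neighboring_sets (p : ℕ) [NeZero p] (hp : p = 3 ∨ p = 5)
    (A B : Finset (ZMod p)) (hAB : Disjoint A B)
    (hA : A.Nonempty) (hB : B.Nonempty) :
    ∃ f : Equiv.Perm (ZMod p), IsAffine p f ∧ f ≠ 1 ∧
      (∀ a ∈ A, f a ∉ B) ∧ (∀ b ∈ B, f b ∉ A) :=
  agl_three_five_no_neighboring_sets_general p hp A B hAB
end

section
/- Let f ∈ S_n be a single k-cycle (a_0, ..., a_{k-1}) with k = n, and randomly partition [n] into sets A, B, C where each element independently lies in A with probability p, in B with probability p, and in C with probability 1−2p, for 0 < p < 1/2. Then the probability that no index i satisfies (a_i ∈ A and a_{i+1 mod k} ∈ B) or (a_i ∈ B and a_{i+1 mod k} ∈ A) is at most (1 − p²/(1−p))^{k−1}. -/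
/-!
Substituting `ψ = χ ∘ a` turns the cycle into `0 → 1 → ⋯ → n-1 → 0`, and dropping the
wrap-around constraint only enlarges the sum, so it suffices to bound the weight `T_m` of
AB-free colourings of a path on `m + 1` vertices. Split `T_m = X_m + Z_m` according to whether
the first vertex lies in `A ∪ B` or in `C`. Prepending a vertex gives
`X' = p X + 2 p Z` and `Z' = (1 - 2p)(X + Z)`, hence `T' = T - p X`; moreover
`(1 - p) X ≥ p T` holds at every length (it reduces to `Z ≥ 0` and `p ≤ 1/2`), so
`T' ≤ (1 - p² / (1 - p)) T`.
-/

open Finset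

section TupleChain

variable {α : Type*} (r : α → α → Prop)

def IsTupleChain {m : ℕ} (χ : Fin (m + 1) → α) : Prop :=
  ∀ i : Fin m, r (χ i.castSucc) (χ i.succ)

instance [DecidableRel r] {m : ℕ} : DecidablePred (IsTupleChain r (m := m)) := fun _ => by
  unfold IsTupleChain; infer_instance

variable {r}

theorem isTupleChain_cons {m : ℕ} (c : α) (ψ : Fin (m + 1) → α) :
    IsTupleChain r (Fin.cons c ψ : Fin (m + 2) → α) ↔ r c (ψ 0) ∧ IsTupleChain r ψ := by
  simp [IsTupleChain, Fin.forall_fin_succ]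

theorem IsTupleChain.of_cyclic {m : ℕ} {χ : Fin (m + 1) → α}
    (h : ∀ i, r (χ i) (χ (i + 1))) : IsTupleChain r χ := fun i => by
  simpa [Fin.coeSucc_eq_succ] using h i.castSucc

end TupleChain

section ChainWeight

variable {α R : Type*} [Fintype α] [DecidableEq α] (r : α → α → Prop) [DecidableRel r]

def chainWeight [CommSemiring R] (w : α → R) (m : ℕ) (c : α) : R :=
  ∑ χ : Fin (m + 1) → α, if IsTupleChain r χ ∧ χ 0 = c then ∏ i, w (χ i) else 0

variable {r}

theorem chainWeight_zero [CommSemiring R] (w : α → R) (c : α) : chainWeight r w 0 c = w c := by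
  rw [chainWeight, ← (Equiv.funUnique (Fin 1) α).symm.sum_comp]
  simp [IsTupleChain]

theorem chainWeight_succ [CommSemiring R] (w : α → R) (m : ℕ) (c : α) :
    chainWeight r w (m + 1) c = w c * ∑ c', if r c c' then chainWeight r w m c' else 0 := by
  rw [chainWeight, ← (Fin.consEquiv fun _ => α).sum_comp, Fintype.sum_prod_type]
  simp only [Fin.consEquiv, Equiv.coe_fn_mk, Fin.cons_zero, isTupleChain_cons,
    Fin.prod_univ_succ (n := m + 1), Fin.cons_succ]
  rw [sum_eq_single c (fun c₀ _ hc₀ => by simp [hc₀]) (by simp)]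
  simp only [chainWeight, ite_sum_zero, mul_sum]
  rw [sum_comm]
  refine sum_congr rfl fun ψ _ => ?_
  rw [Fintype.sum_eq_single (ψ 0) fun c' hc' => by simp [Ne.symm hc']]
  simp [ite_and]

theorem sum_chainWeight [CommSemiring R] (w : α → R) (m : ℕ) :
    ∑ c, chainWeight r w m c =
      ∑ χ : Fin (m + 1) → α, if IsTupleChain r χ then ∏ i, w (χ i) else 0 := by
  simp only [chainWeight]
  rw [sum_comm]
  refine sum_congr rfl fun χ _ => ?_
  simp [ite_and]

variable [CommSemiring R] [PartialOrder R] [IsOrderedRing R] {w : α → R}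

theorem chainWeight_nonneg (hw : ∀ c, 0 ≤ w c) (m : ℕ) (c : α) : 0 ≤ chainWeight r w m c :=
  sum_nonneg fun _ _ => by
    split_ifs
    · exact prod_nonneg fun _ _ => hw _
    · exact le_rfl

theorem sum_cyclic_le_sum_chainWeight (hw : ∀ c, 0 ≤ w c) (m : ℕ) :
    ∑ χ : Fin (m + 1) → α, (if ∀ i, r (χ i) (χ (i + 1)) then ∏ i, w (χ i) else 0) ≤
      ∑ c, chainWeight r w m c := by
  rw [sum_chainWeight]
  refine sum_le_sum fun χ _ => ?_
  split_ifs with hcyc hchain hchain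
  · exact le_rfl
  · exact absurd (IsTupleChain.of_cyclic hcyc) hchain
  · exact prod_nonneg fun _ _ => hw _
  · exact le_rfl

end ChainWeight

namespace NeighboringSets

def colorWeight (p : ℝ) (c : Fin 3) : ℝ := if c = 0 then p else if c = 1 then p else 1 - 2 * p

def AvoidsAB (c c' : Fin 3) : Prop := ¬((c = 0 ∧ c' = 1) ∨ (c = 1 ∧ c' = 0))

instance : DecidableRel AvoidsAB := fun _ _ => by unfold AvoidsAB; infer_instance

variable {p : ℝ}

theorem colorWeight_nonneg (hp0 : 0 ≤ p) (hp2 : p ≤ 1 / 2) (c : Fin 3) :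
    0 ≤ colorWeight p c := by
  unfold colorWeight; split_ifs <;> linarith

noncomputable def abMass (p : ℝ) (m : ℕ) : ℝ :=
  chainWeight AvoidsAB (colorWeight p) m 0 + chainWeight AvoidsAB (colorWeight p) m 1

noncomputable def cMass (p : ℝ) (m : ℕ) : ℝ := chainWeight AvoidsAB (colorWeight p) m 2

theorem abMass_zero : abMass p 0 = 2 * p := by
  simp [abMass, chainWeight_zero, colorWeight]; ring

theorem cMass_zero : cMass p 0 = 1 - 2 * p := by
  simp [cMass, chainWeight_zero, colorWeight]

theorem abMass_succ (m : ℕ) : abMass p (m + 1) = p * abMass p m + 2 * p * cMass p m := by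
  simp [abMass, cMass, chainWeight_succ, Fin.sum_univ_three, AvoidsAB, colorWeight]; ring

theorem cMass_succ (m : ℕ) : cMass p (m + 1) = (1 - 2 * p) * (abMass p m + cMass p m) := by
  simp [abMass, cMass, chainWeight_succ, Fin.sum_univ_three, AvoidsAB, colorWeight]

theorem mass_succ (m : ℕ) :
    abMass p (m + 1) + cMass p (m + 1) = abMass p m + cMass p m - p * abMass p m := by
  rw [abMass_succ, cMass_succ]; ring

theorem cMass_nonneg (hp0 : 0 ≤ p) (hp2 : p ≤ 1 / 2) (m : ℕ) : 0 ≤ cMass p m :=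
  chainWeight_nonneg (colorWeight_nonneg hp0 hp2) m 2

theorem mul_mass_le_abMass (hp0 : 0 ≤ p) (hp2 : p ≤ 1 / 2) (m : ℕ) :
    p * (abMass p m + cMass p m) ≤ (1 - p) * abMass p m := by
  cases m with
  | zero => rw [abMass_zero, cMass_zero]; nlinarith
  | succ m =>
    rw [abMass_succ, cMass_succ]
    have h2p : 0 ≤ 1 - 2 * p := by linarith
    nlinarith [mul_nonneg (mul_nonneg hp0 h2p) (cMass_nonneg hp0 hp2 m)]

theorem mass_le (hp0 : 0 ≤ p) (hp2 : p ≤ 1 / 2) (m : ℕ) :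
    abMass p m + cMass p m ≤ (1 - p ^ 2 / (1 - p)) ^ m := by
  have h1p : 0 < 1 - p := by linarith
  have hq : 0 ≤ 1 - p ^ 2 / (1 - p) := by
    rw [sub_nonneg, div_le_one h1p]; nlinarith
  induction m with
  | zero => rw [abMass_zero, cMass_zero]; simp
  | succ m ih =>
    have key := mul_mass_le_abMass hp0 hp2 m
    calc abMass p (m + 1) + cMass p (m + 1) = abMass p m + cMass p m - p * abMass p m :=
          mass_succ m
      _ ≤ (1 - p ^ 2 / (1 - p)) * (abMass p m + cMass p m) := by
        rw [sub_mul, one_mul, sub_le_sub_iff_left, div_mul_eq_mul_div, div_le_iff₀ h1p]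
        nlinarith
      _ ≤ (1 - p ^ 2 / (1 - p)) ^ (m + 1) := by
        rw [pow_succ' _ m]; gcongr

end NeighboringSets

open NeighboringSets

/-- For a single `n`-cycle `(a 0, a 1, ..., a (n-1))` on `[n]` and an i.i.d. random
3-coloring of `[n]` into parts `A` (color 0, prob. `p`), `B` (color 1, prob. `p`),
`C` (color 2, prob. `1-2p`), the probability that no cyclically consecutive pair
`(a i, a (i+1))` has one element in `A` and the other in `B` is at most
`(1 - p²/(1-p))^(n-1)`. -/
theorem single_cycle_neighboring_probability (n : ℕ) (hn : 0 < n)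
    (a : Fin n ≃ Fin n) (p : ℝ) (hp0 : 0 < p) (hp2 : p < 1 / 2) :
    (∑ χ : Fin n → Fin 3,
      if (∀ i : Fin n,
            ¬((χ (a i) = 0 ∧ χ (a (i + ⟨1 % n, Nat.mod_lt 1 hn⟩)) = 1) ∨
              (χ (a i) = 1 ∧ χ (a (i + ⟨1 % n, Nat.mod_lt 1 hn⟩)) = 0)))
      then ∏ i : Fin n, (if χ i = 0 then p else if χ i = 1 then p else 1 - 2 * p)
      else 0)
    ≤ (1 - p ^ 2 / (1 - p)) ^ (n - 1) := by
  obtain ⟨m, rfl⟩ : ∃ m, n = m + 1 := ⟨n - 1, by omega⟩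
  calc _ = ∑ ψ : Fin (m + 1) → Fin 3,
          if ∀ i, AvoidsAB (ψ i) (ψ (i + 1)) then ∏ i, colorWeight p (ψ i) else 0 := by
        refine Fintype.sum_equiv (a.arrowCongr (Equiv.refl _)).symm _ _ fun χ => ?_
        rw [← a.prod_comp]
        rfl
    _ ≤ abMass p m + cMass p m := by
        rw [abMass, cMass, ← Fin.sum_univ_three]
        exact sum_cyclic_le_sum_chainWeight (colorWeight_nonneg hp0.le hp2.le) m
    _ ≤ _ := mass_le hp0.le hp2.le m
end
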